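/- Let v be the cooperative game on N = {0,1,2} defined by v(S) = min(1[0∈S], 1[1∈S] + 1[2∈S]), and let v' be the cooperative game on N' = {0, m} defined by v'(S) = min(1[0∈S], 2·1[m∈S]). Then Sh_1(v) = Sh_2(v) = 1/6 and Sh_m(v') = 1/2 > Sh_1(v) + Sh_2(v). Hence the Shapley value mechanism violates merge-proofness: two parallel unit-capacity edges strictly gain by merging into one edge of capacity 2. -/
import Mathlib


open Finset

/-- The Shapley value of player `i` in the cooperative game `v` on finite player set `N`. -/
noncomputable def shapley {N : Type*} [Fintype N] [DecidableEq N]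
    (v : Finset N → ℝ) (i : N) : ℝ :=
  ∑ S ∈ Finset.univ.filter (fun S : Finset N => i ∈ S),
    (((S.card - 1).factorial * (Fintype.card N - S.card).factorial : ℕ) : ℝ) /
      ((Fintype.card N).factorial : ℝ) * (v S - v (S.erase i))

/-- Max-flow game of the network with one edge `0` of capacity 1 from source to node `A`
and two parallel unit-capacity edges `1, 2` from `A` to the sink. -/
noncomputable def vMerge (S : Finset (Fin 3)) : ℝ :=
  min (if 0 ∈ S then 1 else 0) ((if 1 ∈ S then 1 else 0) + (if 2 ∈ S then 1 else 0))

/-- The same network after edges `1` and `2` merge into a single edge `1` of capacity 2. -/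
noncomputable def vMerge' (S : Finset (Fin 2)) : ℝ :=
  min (if 0 ∈ S then 1 else 0) (if 1 ∈ S then 2 else 0)

lemma shapley_vMerge_one : shapley vMerge 1 = 1 / 6 := by
  rw [shapley, show (univ.filter (fun S : Finset (Fin 3) => 1 ∈ S))
      = {{1},{0,1},{1,2},{0,1,2}} from by decide]
  rw [Finset.sum_insert (by decide), Finset.sum_insert (by decide),
    Finset.sum_insert (by decide), Finset.sum_singleton]
  norm_num [vMerge, Fin.ext_iff, show #({1,2}:Finset (Fin 3)) = 2 from by decide,
    show #({0,1}:Finset (Fin 3)) = 2 from by decide,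
    show #({0,1,2}:Finset (Fin 3)) = 3 from by decide, Nat.factorial]

lemma shapley_vMerge_two : shapley vMerge 2 = 1 / 6 := by
  rw [shapley, show (univ.filter (fun S : Finset (Fin 3) => 2 ∈ S))
      = {{2},{0,2},{1,2},{0,1,2}} from by decide]
  rw [Finset.sum_insert (by decide), Finset.sum_insert (by decide),
    Finset.sum_insert (by decide), Finset.sum_singleton]
  norm_num [vMerge, Fin.ext_iff, show #({1,2}:Finset (Fin 3)) = 2 from by decide,
    show #({0,2}:Finset (Fin 3)) = 2 from by decide,
    show #({0,1,2}:Finset (Fin 3)) = 3 from by decide, Nat.factorial]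

lemma shapley_vMerge'_one : shapley vMerge' 1 = 1 / 2 := by
  rw [shapley, show (univ.filter (fun S : Finset (Fin 2) => 1 ∈ S))
      = {{1},{0,1}} from by decide]
  rw [Finset.sum_insert (by decide), Finset.sum_singleton]
  norm_num [vMerge', Fin.ext_iff, show #({0,1}:Finset (Fin 2)) = 2 from by decide,
    Nat.factorial]

/-- The Shapley value mechanism violates merge-proofness: the two parallel unit-capacity
edges each get `1/6`, but after merging the combined edge gets `1/2 > 1/6 + 1/6`. -/
theorem shapley_not_merge_proof :
    shapley vMerge 1 = 1 / 6 ∧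
    shapley vMerge 2 = 1 / 6 ∧
    shapley vMerge' 1 = 1 / 2 ∧
    shapley vMerge 1 + shapley vMerge 2 < shapley vMerge' 1 := by
  refine ⟨shapley_vMerge_one, shapley_vMerge_two, shapley_vMerge'_one, ?_⟩
  rw [shapley_vMerge_one, shapley_vMerge_two, shapley_vMerge'_one]
  norm_num
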